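/- Interpolation property of Gelfand numbers: let 0 < θ < 1, let X, Y, Y₀, Y₁ be Banach spaces with Y₀ ∩ Y₁ ⊆ Y, and suppose there is C > 0 with ‖y‖_Y ≤ C ‖y‖_{Y₀}^{1−θ} ‖y‖_{Y₁}^{θ} for all y ∈ Y₀ ∩ Y₁. If T is a bounded linear operator from X into Y₀, Y₁ and Y simultaneously, then c_{n+m−1}(T : X → Y) ≤ C · c_n(T : X → Y₀)^{1−θ} · c_m(T : X → Y₁)^{θ} for all n, m ∈ ℕ. -/

import Mathlib

/-! If `M₀` and `M₁` have codimensions `< n` and `< m` and nearly realise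
`c_n(T₀)` and `c_m(T₁)`, then `M₀ ⊓ M₁` has codimension `< n + m - 1`, and on it the
interpolation inequality bounds `‖T x‖` by `C ‖T₀|M₀‖^{1-θ} ‖T₁|M₁‖^θ ‖x‖`. -/

open Module

variable {X Y Y₀ Y₁ : Type*} [NormedAddCommGroup X] [NormedSpace ℝ X]
  [NormedAddCommGroup Y] [NormedSpace ℝ Y]
  [NormedAddCommGroup Y₀] [NormedSpace ℝ Y₀] [NormedAddCommGroup Y₁] [NormedSpace ℝ Y₁]

/-- The `n`-th Gelfand number of a bounded linear operator. -/
noncomputable def gelfand {E F : Type*} [NormedAddCommGroup E] [NormedSpace ℝ E]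
    [NormedAddCommGroup F] [NormedSpace ℝ F] (n : ℕ) (T : E →L[ℝ] F) : ℝ :=
  sInf {r : ℝ | ∃ M : Submodule ℝ E, IsClosed (M : Set E) ∧
    Module.Finite ℝ (E ⧸ M) ∧ Module.finrank ℝ (E ⧸ M) < n ∧
    r = ‖T.comp M.subtypeL‖}

namespace Submodule

variable {K V : Type*} [DivisionRing K] [AddCommGroup V] [Module K V]

theorem ker_mkQ_prod_mkQ (M₀ M₁ : Submodule K V) :
    LinearMap.ker (M₀.mkQ.prod M₁.mkQ) = M₀ ⊓ M₁ := by
  rw [LinearMap.ker_prod, ker_mkQ, ker_mkQ]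

theorem injective_quotientInf_mkQ_prod (M₀ M₁ : Submodule K V) :
    Function.Injective ((M₀ ⊓ M₁).liftQ (M₀.mkQ.prod M₁.mkQ) (ker_mkQ_prod_mkQ M₀ M₁).ge) := by
  rw [← LinearMap.ker_eq_bot]
  exact ker_liftQ_eq_bot _ _ _ (ker_mkQ_prod_mkQ M₀ M₁).le

theorem finite_quotient_inf (M₀ M₁ : Submodule K V) [Module.Finite K (V ⧸ M₀)]
    [Module.Finite K (V ⧸ M₁)] : Module.Finite K (V ⧸ (M₀ ⊓ M₁)) :=
  Module.Finite.of_injective _ (injective_quotientInf_mkQ_prod M₀ M₁)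

theorem finrank_quotient_inf_le (M₀ M₁ : Submodule K V) [Module.Finite K (V ⧸ M₀)]
    [Module.Finite K (V ⧸ M₁)] :
    finrank K (V ⧸ (M₀ ⊓ M₁)) ≤ finrank K (V ⧸ M₀) + finrank K (V ⧸ M₁) := by
  simpa only [finrank_prod] using
    LinearMap.finrank_le_finrank_of_injective (injective_quotientInf_mkQ_prod M₀ M₁)

end Submodule

section Gelfand

variable {E F : Type*} [NormedAddCommGroup E] [NormedSpace ℝ E]
  [NormedAddCommGroup F] [NormedSpace ℝ F]

theorem gelfand_nonneg (n : ℕ) (T : E →L[ℝ] F) : 0 ≤ gelfand n T := by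
  unfold gelfand
  apply Real.sInf_nonneg
  rintro r ⟨M, -, -, -, rfl⟩
  exact (T.comp M.subtypeL).opNorm_nonneg

theorem gelfand_le_opNorm_comp_subtypeL {n : ℕ} (T : E →L[ℝ] F) (M : Submodule ℝ E)
    (hM : IsClosed (M : Set E)) [Module.Finite ℝ (E ⧸ M)] (hMn : finrank ℝ (E ⧸ M) < n) :
    gelfand n T ≤ ‖T.comp M.subtypeL‖ := by
  unfold gelfand
  refine csInf_le ⟨0, ?_⟩ ⟨M, hM, ‹_›, hMn, rfl⟩
  rintro r ⟨M, -, -, -, rfl⟩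
  exact (T.comp M.subtypeL).opNorm_nonneg

/-- For `n = 0` no subspace qualifies and `gelfand 0 T` is the junk value `sInf ∅ = 0`. -/
theorem exists_opNorm_comp_subtypeL_lt_gelfand_add {n : ℕ} (hn : 1 ≤ n) (T : E →L[ℝ] F)
    {ε : ℝ} (hε : 0 < ε) :
    ∃ M : Submodule ℝ E, IsClosed (M : Set E) ∧ Module.Finite ℝ (E ⧸ M) ∧
      finrank ℝ (E ⧸ M) < n ∧ ‖T.comp M.subtypeL‖ < gelfand n T + ε := by
  have htop : finrank ℝ (E ⧸ (⊤ : Submodule ℝ E)) = 0 := finrank_zero_of_subsingleton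
  obtain ⟨_, ⟨M, hM, hfin, hMn, rfl⟩, hlt⟩ := exists_lt_of_csInf_lt
    (by exact ⟨_, ⊤, by simp, inferInstance, by omega, rfl⟩)
    (lt_add_of_pos_right (gelfand n T) hε)
  exact ⟨M, hM, hfin, hMn, hlt⟩

end Gelfand

theorem opNorm_comp_subtypeL_inf_le {θ C : ℝ} (hθ₀ : 0 ≤ θ) (hθ₁ : θ ≤ 1) (hC : 0 ≤ C)
    (T : X →L[ℝ] Y) (T₀ : X →L[ℝ] Y₀) (T₁ : X →L[ℝ] Y₁)
    (hinterp : ∀ x : X, ‖T x‖ ≤ C * ‖T₀ x‖ ^ (1 - θ) * ‖T₁ x‖ ^ θ) (M₀ M₁ : Submodule ℝ X) :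
    ‖T.comp (M₀ ⊓ M₁).subtypeL‖ ≤
      C * ‖T₀.comp M₀.subtypeL‖ ^ (1 - θ) * ‖T₁.comp M₁.subtypeL‖ ^ θ := by
  have ha := (T₀.comp M₀.subtypeL).opNorm_nonneg
  have hb := (T₁.comp M₁.subtypeL).opNorm_nonneg
  set a := ‖T₀.comp M₀.subtypeL‖
  set b := ‖T₁.comp M₁.subtypeL‖
  refine (T.comp (M₀ ⊓ M₁).subtypeL).opNorm_le_bound (by positivity) fun x ↦ ?_
  have hx₀ : ‖T₀ x‖ ≤ a * ‖x‖ := (T₀.comp M₀.subtypeL).le_opNorm ⟨x, x.2.1⟩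
  have hx₁ : ‖T₁ x‖ ≤ b * ‖x‖ := (T₁.comp M₁.subtypeL).le_opNorm ⟨x, x.2.2⟩
  have hsplit : ‖x‖ ^ (1 - θ) * ‖x‖ ^ θ = ‖x‖ := by
    rw [← Real.rpow_add' (norm_nonneg _) (by norm_num), sub_add_cancel, Real.rpow_one]
  calc ‖T x‖ ≤ C * ‖T₀ x‖ ^ (1 - θ) * ‖T₁ x‖ ^ θ := hinterp x
    _ ≤ C * (a * ‖x‖) ^ (1 - θ) * (b * ‖x‖) ^ θ := by gcongr
    _ = C * a ^ (1 - θ) * b ^ θ * ‖x‖ := by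
      rw [Real.mul_rpow ha (norm_nonneg x), Real.mul_rpow hb (norm_nonneg x)]
      linear_combination C * a ^ (1 - θ) * b ^ θ * hsplit

theorem le_mul_rpow_mul_rpow_of_forall_pos {c C a b θ : ℝ} (hθ₀ : 0 ≤ θ) (hθ₁ : θ ≤ 1)
    (h : ∀ ε > 0, c ≤ C * (a + ε) ^ (1 - θ) * (b + ε) ^ θ) :
    c ≤ C * a ^ (1 - θ) * b ^ θ := by
  have hcont : ContinuousAt (fun ε : ℝ ↦ C * (a + ε) ^ (1 - θ) * (b + ε) ^ θ) 0 := by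
    fun_prop (disch := right; linarith)
  refine ge_of_tendsto (by simpa using hcont.continuousWithinAt.tendsto (s := Set.Ioi 0)) ?_
  filter_upwards [self_mem_nhdsWithin] with ε hε using h ε hε

theorem stmt7_general
    (θ C : ℝ) (hθ₀ : 0 < θ) (hθ₁ : θ < 1) (hC : 0 < C)
    (T : X →L[ℝ] Y) (T₀ : X →L[ℝ] Y₀) (T₁ : X →L[ℝ] Y₁)
    (hinterp : ∀ x : X, ‖T x‖ ≤ C * ‖T₀ x‖ ^ (1 - θ) * ‖T₁ x‖ ^ θ)
    (n m : ℕ) (hn : 1 ≤ n) (hm : 1 ≤ m) :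
    gelfand (n + m - 1) T ≤ C * gelfand n T₀ ^ (1 - θ) * gelfand m T₁ ^ θ := by
  refine le_mul_rpow_mul_rpow_of_forall_pos hθ₀.le hθ₁.le fun ε hε ↦ ?_
  obtain ⟨M₀, hM₀, hfin₀, hM₀n, hlt₀⟩ := exists_opNorm_comp_subtypeL_lt_gelfand_add hn T₀ hε
  obtain ⟨M₁, hM₁, hfin₁, hM₁m, hlt₁⟩ := exists_opNorm_comp_subtypeL_lt_gelfand_add hm T₁ hε
  have := M₀.finite_quotient_inf M₁
  have hcodim : finrank ℝ (X ⧸ (M₀ ⊓ M₁)) < n + m - 1 := by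
    have := M₀.finrank_quotient_inf_le M₁
    omega
  calc gelfand (n + m - 1) T ≤ ‖T.comp (M₀ ⊓ M₁).subtypeL‖ :=
        gelfand_le_opNorm_comp_subtypeL T _ (hM₀.inter hM₁) hcodim
    _ ≤ C * ‖T₀.comp M₀.subtypeL‖ ^ (1 - θ) * ‖T₁.comp M₁.subtypeL‖ ^ θ :=
        opNorm_comp_subtypeL_inf_le hθ₀.le hθ₁.le hC.le T T₀ T₁ hinterp M₀ M₁
    _ ≤ C * (gelfand n T₀ + ε) ^ (1 - θ) * (gelfand m T₁ + ε) ^ θ := by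
        have hg₀ := gelfand_nonneg n T₀
        gcongr

/-- Interpolation property of Gelfand numbers: `T`, `T₀`, `T₁` represent the same operator
viewed with target norms `Y`, `Y₀`, `Y₁`, and the `Y`-norm satisfies the multiplicative
interpolation inequality `‖Tx‖ ≤ C ‖T₀x‖^{1-θ} ‖T₁x‖^{θ}`. -/
theorem stmt7 [CompleteSpace X] [CompleteSpace Y] [CompleteSpace Y₀] [CompleteSpace Y₁]
    (θ C : ℝ) (hθ₀ : 0 < θ) (hθ₁ : θ < 1) (hC : 0 < C)
    (T : X →L[ℝ] Y) (T₀ : X →L[ℝ] Y₀) (T₁ : X →L[ℝ] Y₁)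
    (hinterp : ∀ x : X, ‖T x‖ ≤ C * ‖T₀ x‖ ^ (1 - θ) * ‖T₁ x‖ ^ θ)
    (n m : ℕ) (hn : 1 ≤ n) (hm : 1 ≤ m) :
    gelfand (n + m - 1) T ≤ C * gelfand n T₀ ^ (1 - θ) * gelfand m T₁ ^ θ :=
  stmt7_general θ C hθ₀ hθ₁ hC T T₀ T₁ hinterp n m hn hm
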